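/- arXiv:1812.01935 — 5 statements merged into one kernel-verified Lean document; each statement's English description precedes it below -/
import Mathlib

section
/- Suppose a_τ < 0. Then τ_m < τ_cp, the function ρ is strictly decreasing on the open interval (τ_m, τ_cp), strictly increasing on (−∞, τ_m), and strictly increasing on (τ_cp, +∞). -/
/-!
Writing `A = ‖a‖²`, `G = aᵀg`, `Q = aᵀBa`, the quotient rule gives
`ρ'(τ) = (G + τ a_τ) / (1 - τ A)³` away from the pole `τ_m = 1/A`.
The numerator is positive exactly for `τ < τ_cp` because `a_τ < 0`, and the denominator
is positive exactly for `τ < τ_m`. Finally `τ_m < τ_cp` amounts to `A G - Q < A G`,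
i.e. to `Q > 0`, which holds since `B` is positive definite.
-/

open scoped RealInnerProductSpace
open Set

lemma Matrix.PosDef.inner_toEuclideanLin_self_pos {ι : Type*} [Fintype ι] [DecidableEq ι]
    {B : Matrix ι ι ℝ} (hB : B.PosDef) {x : EuclideanSpace ℝ ι} (hx : x ≠ 0) :
    0 < ⟪x, B.toEuclideanLin x⟫ := by
  have hx' : WithLp.ofLp x ≠ 0 := by simpa using hx
  simpa [EuclideanSpace.inner_eq_star_dotProduct, dotProduct_comm] using
    hB.dotProduct_mulVec_pos hx'

lemma strictMonoOn_of_hasDerivAt_pos {D : Set ℝ} (hD : Convex ℝ D) (hDo : IsOpen D)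
    {f f' : ℝ → ℝ} (hf : ∀ x ∈ D, HasDerivAt f (f' x) x) (hf' : ∀ x ∈ D, 0 < f' x) :
    StrictMonoOn f D :=
  strictMonoOn_of_deriv_pos hD (fun x hx => (hf x hx).continuousAt.continuousWithinAt)
    fun x hx => by
      rw [hDo.interior_eq] at hx
      rw [(hf x hx).deriv]
      exact hf' x hx

lemma strictAntiOn_of_hasDerivAt_neg {D : Set ℝ} (hD : Convex ℝ D) (hDo : IsOpen D)
    {f f' : ℝ → ℝ} (hf : ∀ x ∈ D, HasDerivAt f (f' x) x) (hf' : ∀ x ∈ D, f' x < 0) :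
    StrictAntiOn f D :=
  strictAntiOn_of_deriv_neg hD (fun x hx => (hf x hx).continuousAt.continuousWithinAt)
    fun x hx => by
      rw [hDo.interior_eq] at hx
      rw [(hf x hx).deriv]
      exact hf' x hx

lemma lt_one_div_iff_one_sub_mul_pos {a τ : ℝ} (ha : 0 < a) : τ < 1 / a ↔ 0 < 1 - τ * a := by
  rw [lt_div_iff₀ ha, sub_pos]

lemma one_div_lt_iff_one_sub_mul_neg {a τ : ℝ} (ha : 0 < a) : 1 / a < τ ↔ 1 - τ * a < 0 := by
  rw [div_lt_iff₀ ha, sub_neg]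

lemma lt_neg_div_iff_add_mul_pos {b c τ : ℝ} (hc : c < 0) : τ < -b / c ↔ 0 < b + τ * c := by
  rw [lt_div_iff_of_neg hc]
  constructor <;> intro h <;> linarith

lemma neg_div_lt_iff_add_mul_neg {b c τ : ℝ} (hc : c < 0) : -b / c < τ ↔ b + τ * c < 0 := by
  rw [div_lt_iff_of_neg hc]
  constructor <;> intro h <;> linarith

noncomputable def rho (A G Q τ : ℝ) : ℝ :=
  τ * G / (1 - τ * A) + τ ^ 2 * Q / (2 * (1 - τ * A) ^ 2)

section rho

variable {A G Q : ℝ}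

theorem hasDerivAt_rho {τ : ℝ} (hτ : 1 - τ * A ≠ 0) :
    HasDerivAt (rho A G Q) ((G + τ * (Q - A * G)) / (1 - τ * A) ^ 3) τ := by
  have hden : HasDerivAt (fun t : ℝ => 1 - t * A) (-A) τ := by
    simpa using ((hasDerivAt_id τ).mul_const A).const_sub 1
  have hlin := ((hasDerivAt_id τ).mul_const G).div hden hτ
  have hquad := ((hasDerivAt_pow 2 τ).mul_const Q).div ((hden.pow 2).const_mul 2)
    (mul_ne_zero two_ne_zero (pow_ne_zero 2 hτ))
  have hsum : HasDerivAt (rho A G Q) _ τ := hlin.add hquad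
  convert hsum using 1
  simp only [id, Pi.pow_apply, Nat.cast_ofNat]
  field_simp
  ring

lemma one_div_lt_neg_div (hA : 0 < A) (hQ : 0 < Q) (hc : Q - A * G < 0) :
    1 / A < -G / (Q - A * G) := by
  rw [neg_div, ← div_neg, div_lt_div_iff₀ hA (neg_pos.2 hc)]
  linarith

theorem rho_strictAntiOn_Ioo (hA : 0 < A) (hc : Q - A * G < 0) :
    StrictAntiOn (rho A G Q) (Ioo (1 / A) (-G / (Q - A * G))) := by
  refine strictAntiOn_of_hasDerivAt_neg (convex_Ioo _ _) isOpen_Ioo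
    (fun τ hτ => hasDerivAt_rho ((one_div_lt_iff_one_sub_mul_neg hA).1 hτ.1).ne) fun τ hτ => ?_
  exact div_neg_of_pos_of_neg ((lt_neg_div_iff_add_mul_pos hc).1 hτ.2)
    (Odd.pow_neg (by decide) ((one_div_lt_iff_one_sub_mul_neg hA).1 hτ.1))

theorem rho_strictMonoOn_Iio (hA : 0 < A) (hQ : 0 < Q) (hc : Q - A * G < 0) :
    StrictMonoOn (rho A G Q) (Iio (1 / A)) := by
  refine strictMonoOn_of_hasDerivAt_pos (convex_Iio _) isOpen_Iio
    (fun τ hτ => hasDerivAt_rho ((lt_one_div_iff_one_sub_mul_pos hA).1 hτ).ne') fun τ hτ => ?_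
  have hτ' : τ < -G / (Q - A * G) := lt_trans hτ (one_div_lt_neg_div hA hQ hc)
  exact div_pos ((lt_neg_div_iff_add_mul_pos hc).1 hτ')
    (pow_pos ((lt_one_div_iff_one_sub_mul_pos hA).1 hτ) 3)

theorem rho_strictMonoOn_Ioi (hA : 0 < A) (hQ : 0 < Q) (hc : Q - A * G < 0) :
    StrictMonoOn (rho A G Q) (Ioi (-G / (Q - A * G))) := by
  have hpole {τ : ℝ} (hτ : τ ∈ Ioi (-G / (Q - A * G))) : 1 - τ * A < 0 :=
    (one_div_lt_iff_one_sub_mul_neg hA).1 (lt_trans (one_div_lt_neg_div hA hQ hc) hτ)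
  refine strictMonoOn_of_hasDerivAt_pos (convex_Ioi _) isOpen_Ioi
    (fun τ hτ => hasDerivAt_rho (hpole hτ).ne) fun τ hτ => ?_
  exact div_pos_of_neg_of_neg ((neg_div_lt_iff_add_mul_neg hc).1 hτ)
    (Odd.pow_neg (by decide) (hpole hτ))

end rho

theorem stmt_0_general {n : ℕ}
    (a g : EuclideanSpace ℝ (Fin n)) (ha : a ≠ 0)
    (B : Matrix (Fin n) (Fin n) ℝ) (hBpd : B.PosDef)
    (ρ : ℝ → ℝ)
    (hρ : ∀ τ : ℝ, τ ≠ 1 / ‖a‖ ^ 2 →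
      ρ τ = τ * ⟪a, g⟫ / (1 - τ * ‖a‖ ^ 2)
        + τ ^ 2 * ⟪a, Matrix.toEuclideanLin B a⟫ / (2 * (1 - τ * ‖a‖ ^ 2) ^ 2))
    (aτ τm τcp : ℝ)
    (haτ : aτ = ⟪a, Matrix.toEuclideanLin B a⟫ - ‖a‖ ^ 2 * ⟪a, g⟫)
    (hτm : τm = 1 / ‖a‖ ^ 2)
    (hτcp : aτ ≠ 0 → τcp = -⟪a, g⟫ / aτ)
    (haτneg : aτ < 0) :
    τm < τcp ∧ StrictAntiOn ρ (Set.Ioo τm τcp) ∧ StrictMonoOn ρ (Set.Iio τm) ∧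
      StrictMonoOn ρ (Set.Ioi τcp) := by
  have hA : 0 < ‖a‖ ^ 2 := pow_pos (norm_pos_iff.2 ha) 2
  have hQ := hBpd.inner_toEuclideanLin_self_pos ha
  have hρ' : EqOn (rho (‖a‖ ^ 2) ⟪a, g⟫ ⟪a, Matrix.toEuclideanLin B a⟫) ρ
      {τ | τ ≠ 1 / ‖a‖ ^ 2} := fun τ hτ => (hρ τ hτ).symm
  obtain rfl := hτcp haτneg.ne
  subst haτ hτm
  have hlt := one_div_lt_neg_div hA hQ haτneg
  exact ⟨hlt,
    (rho_strictAntiOn_Ioo hA haτneg).congr (hρ'.mono fun _ hτ => hτ.1.ne'),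
    (rho_strictMonoOn_Iio hA hQ haτneg).congr (hρ'.mono fun _ hτ => ne_of_lt hτ),
    (rho_strictMonoOn_Ioi hA hQ haτneg).congr (hρ'.mono fun _ hτ => (hlt.trans hτ).ne')⟩

/-- If `a_τ < 0`, then `τ_m < τ_cp`, `ρ` is strictly decreasing on
`(τ_m, τ_cp)`, strictly increasing on `(-∞, τ_m)` and strictly increasing on
`(τ_cp, +∞)`. -/
theorem stmt_0 {n : ℕ} (hn : 1 ≤ n)
    (a g : EuclideanSpace ℝ (Fin n)) (ha : a ≠ 0)
    (B : Matrix (Fin n) (Fin n) ℝ) (hBs : B.IsSymm) (hBpd : B.PosDef)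
    (ρ : ℝ → ℝ)
    (hρ : ∀ τ : ℝ, τ ≠ 1 / ‖a‖ ^ 2 →
      ρ τ = τ * ⟪a, g⟫ / (1 - τ * ‖a‖ ^ 2)
        + τ ^ 2 * ⟪a, Matrix.toEuclideanLin B a⟫ / (2 * (1 - τ * ‖a‖ ^ 2) ^ 2))
    (aτ τm τcp : ℝ)
    (haτ : aτ = ⟪a, Matrix.toEuclideanLin B a⟫ - ‖a‖ ^ 2 * ⟪a, g⟫)
    (hτm : τm = 1 / ‖a‖ ^ 2)
    (hτcp : aτ ≠ 0 → τcp = -⟪a, g⟫ / aτ)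
    (haτneg : aτ < 0) :
    τm < τcp ∧ StrictAntiOn ρ (Set.Ioo τm τcp) ∧ StrictMonoOn ρ (Set.Iio τm) ∧
      StrictMonoOn ρ (Set.Ioi τcp) :=
  stmt_0_general a g ha B hBpd ρ hρ aτ τm τcp haτ hτm hτcp haτneg
end

section
/- Assume aᵀg ≠ 0 and Δ‖a‖ ≤ 1 − ε₀. Define τ* = −τ_Δ if a_τ ≤ 0; τ* = max{−τ_Δ, τ_cp} if a_τ > 0 and aᵀg > 0; τ* = min{τ_cp, τ_Δ} if a_τ > 0 and aᵀg < 0. Then τ* ∈ [−τ_Δ, τ_Δ] and ρ(τ*) ≤ ρ(τ) for every τ ∈ [−τ_Δ, τ_Δ]. -/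
/-!
Substituting u = τ / (1 - τ‖a‖²), which is increasing on τ‖a‖² < 1 (a region containing the trust
region because Δ‖a‖ < 1), turns ρ into the convex quadratic c u + (b/2) u² with b = aᵀBa > 0 and
c = aᵀg, and comparing its values amounts to comparing |b u + c|. The map τ ↦ b u(τ) + c is
increasing. If a_τ > 0 it vanishes at τ_cp, so the minimiser over [-τ_Δ, τ_Δ] is τ_cp clamped to
that interval; if a_τ ≤ 0 it is positive on the whole region (as u > -1/‖a‖²), so the minimiser is
the left endpoint.
-/

open scoped RealInnerProductSpace
open Set

theorem Matrix.PosDef.inner_toEuclideanLin_pos {n : Type*} [Fintype n] [DecidableEq n]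
    {B : Matrix n n ℝ} (hB : B.PosDef) {x : EuclideanSpace ℝ n} (hx : x ≠ 0) :
    0 < ⟪x, B.toEuclideanLin x⟫ := by
  rw [Matrix.toLpLin_apply, EuclideanSpace.inner_eq_star_dotProduct]
  simpa [dotProduct_comm] using hB.dotProduct_mulVec_pos (x := WithLp.ofLp x) (by simpa using hx)

section Monotone
variable {f : ℝ → ℝ} {x y : ℝ}

theorem sq_le_sq_of_monotoneOn_Icc (hf : MonotoneOn f (Icc x y)) {t₀ : ℝ} (ht₀ : t₀ ∈ Icc x y)
    (hl : x < t₀ → f t₀ ≤ 0) (hr : t₀ < y → 0 ≤ f t₀) :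
    ∀ t ∈ Icc x y, f t₀ ^ 2 ≤ f t ^ 2 := by
  intro t ht
  rcases le_total t t₀ with htt | htt
  · rcases ht₀.1.eq_or_lt with rfl | hxt
    · rw [le_antisymm htt ht.1]
    · nlinarith [hf ht ht₀ htt, hl hxt]
  · rcases ht₀.2.lt_or_eq with hty | rfl
    · nlinarith [hf ht₀ ht htt, hr hty]
    · rw [le_antisymm ht.2 htt]

theorem sq_le_sq_of_monotoneOn_clamp {S : Set ℝ} (hf : MonotoneOn f S) (hxy : x ≤ y)
    (hS : Icc x y ⊆ S) {m : ℝ} (hm : m ∈ S) (hfm : f m = 0) :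
    ∀ t ∈ Icc x y, f (max x (min m y)) ^ 2 ≤ f t ^ 2 := by
  have ht₀ : max x (min m y) ∈ Icc x y := ⟨le_max_left _ _, max_le hxy (min_le_right _ _)⟩
  refine sq_le_sq_of_monotoneOn_Icc (hf.mono hS) ht₀ (fun h => ?_) (fun h => ?_)
  · rw [← hfm]
    exact hf (hS ht₀) hm (by grind)
  · rw [← hfm]
    exact hf hm (hS ht₀) (by grind)

end Monotone

noncomputable def moebius (s τ : ℝ) : ℝ := τ / (1 - τ * s)

theorem moebius_monotoneOn (s : ℝ) : MonotoneOn (moebius s) {τ | τ * s < 1} := by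
  intro τ₁ h₁ τ₂ h₂ h
  simp only [mem_ofPred_eq] at h₁ h₂
  rw [moebius, moebius, div_le_div_iff₀ (by linarith) (by linarith)]
  nlinarith

theorem neg_inv_lt_moebius {s τ : ℝ} (hs : 0 < s) (hτ : τ * s < 1) : -s⁻¹ < moebius s τ := by
  have hτ' : 0 < 1 - τ * s := by linarith
  have : moebius s τ + s⁻¹ = (s * (1 - τ * s))⁻¹ := by
    rw [moebius]; field_simp; ring
  have : 0 < (s * (1 - τ * s))⁻¹ := by positivity
  linarith

theorem moebius_neg_div {s c A : ℝ} (hA : A ≠ 0) :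
    moebius s (-c / A) = -c / (A + s * c) := by
  rw [moebius]
  field_simp
  ring_nf

noncomputable def quadModel (b c s τ : ℝ) : ℝ := c * moebius s τ + b / 2 * moebius s τ ^ 2

theorem quadModel_le_of_sq_le {b c s τ₁ τ₂ : ℝ} (hb : 0 < b)
    (h : (b * moebius s τ₁ + c) ^ 2 ≤ (b * moebius s τ₂ + c) ^ 2) :
    quadModel b c s τ₁ ≤ quadModel b c s τ₂ := by
  unfold quadModel
  nlinarith

section Model
variable {b c s r : ℝ}

theorem Icc_neg_subset_mul_lt_one (hs : 0 ≤ s) (hrs : r * s < 1) :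
    Icc (-r) r ⊆ {τ | τ * s < 1} :=
  fun _ hτ => (mul_le_mul_of_nonneg_right hτ.2 hs).trans_lt hrs

theorem monotoneOn_mul_moebius_add (hb : 0 ≤ b) (c : ℝ) :
    MonotoneOn (fun τ => b * moebius s τ + c) {τ | τ * s < 1} :=
  fun _ h₁ _ h₂ h => by
    dsimp only
    gcongr
    exact moebius_monotoneOn s h₁ h₂ h

theorem isMinOn_quadModel_neg (hb : 0 < b) (hs : 0 < s) (hbc : b ≤ s * c) (hr : 0 ≤ r)
    (hrs : r * s < 1) : IsMinOn (quadModel b c s) (Icc (-r) r) (-r) := by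
  refine isMinOn_iff.mpr fun τ hτ => ?_
  have hD := Icc_neg_subset_mul_lt_one hs.le hrs
  have hr' : -r ∈ Icc (-r) r := ⟨le_rfl, by linarith⟩
  have hpos : 0 < b * moebius s (-r) + c := by
    have := neg_inv_lt_moebius hs (hD hr')
    have : b * s⁻¹ ≤ c := by rw [← div_eq_mul_inv, div_le_iff₀ hs]; linarith
    nlinarith
  apply quadModel_le_of_sq_le hb
  exact pow_le_pow_left₀ hpos.le (monotoneOn_mul_moebius_add hb.le c (hD hr') (hD hτ) hτ.1) 2

theorem isMinOn_quadModel_clamp (hb : 0 < b) (hs : 0 < s) (hA : 0 < b - s * c) (hr : 0 ≤ r)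
    (hrs : r * s < 1) :
    IsMinOn (quadModel b c s) (Icc (-r) r) (max (-r) (min (-c / (b - s * c)) r)) := by
  refine isMinOn_iff.mpr fun τ hτ => ?_
  apply quadModel_le_of_sq_le hb
  refine sq_le_sq_of_monotoneOn_clamp (monotoneOn_mul_moebius_add hb.le c) (by linarith)
    (Icc_neg_subset_mul_lt_one hs.le hrs) ?_ ?_ τ hτ
  · show -c / (b - s * c) * s < 1
    rw [div_mul_eq_mul_div, div_lt_one hA]
    linarith
  · show b * moebius s (-c / (b - s * c)) + c = 0
    rw [moebius_neg_div hA.ne', sub_add_cancel]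
    field_simp
    ring

theorem isMinOn_quadModel (hb : 0 < b) (hs : 0 < s) (hr : 0 ≤ r) (hrs : r * s < 1) (hc : c ≠ 0)
    {τcp τstar : ℝ} (hτcp : b - s * c ≠ 0 → τcp = -c / (b - s * c))
    (h₁ : b - s * c ≤ 0 → τstar = -r)
    (h₂ : 0 < b - s * c → 0 < c → τstar = max (-r) τcp)
    (h₃ : 0 < b - s * c → c < 0 → τstar = min τcp r) :
    τstar ∈ Icc (-r) r ∧ IsMinOn (quadModel b c s) (Icc (-r) r) τstar := by
  rcases le_or_gt (b - s * c) 0 with hA | hA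
  · rw [h₁ hA]
    exact ⟨⟨le_rfl, by linarith⟩, isMinOn_quadModel_neg hb hs (by linarith) hr hrs⟩
  have hclamp : τstar = max (-r) (min (-c / (b - s * c)) r) := by
    rw [← hτcp hA.ne']
    rcases hc.lt_or_gt with hc | hc
    · have : 0 < τcp := hτcp hA.ne' ▸ div_pos (neg_pos.mpr hc) hA
      rw [h₃ hA hc, max_eq_right (le_min (by linarith) (by linarith))]
    · have : τcp < 0 := hτcp hA.ne' ▸ div_neg_of_neg_of_pos (neg_neg_iff_pos.mpr hc) hA
      rw [h₂ hA hc, min_eq_left (by linarith)]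
  rw [hclamp]
  exact ⟨⟨le_max_left _ _, max_le (by linarith) (min_le_right _ _)⟩,
    isMinOn_quadModel_clamp hb hs hA hr hrs⟩

end Model

theorem stmt_4 {{n : ℕ}} (hn : 1 ≤ n)
    (a g : EuclideanSpace ℝ (Fin n)) (ha : a ≠ 0)
    (B : Matrix (Fin n) (Fin n) ℝ) (hBs : B.IsSymm) (hBpd : B.PosDef)
    (ρ : ℝ → ℝ)
    (hρ : ∀ τ : ℝ, τ ≠ 1 / ‖a‖ ^ 2 →
      ρ τ = τ * ⟪a, g⟫ / (1 - τ * ‖a‖ ^ 2)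
        + τ ^ 2 * ⟪a, Matrix.toEuclideanLin B a⟫ / (2 * (1 - τ * ‖a‖ ^ 2) ^ 2))
    (aτ τm : ℝ)
    (haτ : aτ = ⟪a, Matrix.toEuclideanLin B a⟫ - ‖a‖ ^ 2 * ⟪a, g⟫)
    (hτm : τm = 1 / ‖a‖ ^ 2)
    (τcp : ℝ) (hτcp : aτ ≠ 0 → τcp = -⟪a, g⟫ / aτ)
    (Δ ε₀ : ℝ) (hΔ : 0 < Δ) (hε₀ : 0 < ε₀) (hε₁ : ε₀ < 1)
    (τΔ τd τu : ℝ) (hτΔ : τΔ = Δ / ‖a‖) (hτd : τd = (1 - ε₀) / ‖a‖ ^ 2)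
    (hτu : τu = (1 + ε₀) / ‖a‖ ^ 2)
    (hag : ⟪a, g⟫ ≠ 0) (hcase : Δ * ‖a‖ ≤ 1 - ε₀)
    (τstar : ℝ)
    (hτs1 : aτ ≤ 0 → τstar = -τΔ)
    (hτs2 : 0 < aτ → 0 < ⟪a, g⟫ → τstar = max (-τΔ) τcp)
    (hτs3 : 0 < aτ → ⟪a, g⟫ < 0 → τstar = min τcp τΔ) :
    τstar ∈ Set.Icc (-τΔ) τΔ ∧ ∀ τ ∈ Set.Icc (-τΔ) τΔ, ρ τstar ≤ ρ τ := by
  have hna : 0 < ‖a‖ := norm_pos_iff.mpr ha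
  have hr : 0 ≤ τΔ := hτΔ ▸ by positivity
  have hrs : τΔ * ‖a‖ ^ 2 < 1 := by
    rw [hτΔ, div_mul_eq_mul_div, pow_two, ← mul_assoc, mul_div_cancel_right₀ _ hna.ne']
    linarith
  set c := ⟪a, g⟫
  set b := ⟪a, Matrix.toEuclideanLin B a⟫
  set s := ‖a‖ ^ 2
  have hs : 0 < s := by positivity
  have hρ' : ∀ τ ∈ Icc (-τΔ) τΔ, ρ τ = quadModel b c s τ := by
    intro τ hτ
    have hτs : τ * s < 1 := Icc_neg_subset_mul_lt_one hs.le hrs hτ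
    have hτ₁ : τ ≠ 1 / s := by
      rintro rfl
      simp [hs.ne'] at hτs
    have : 1 - τ * s ≠ 0 := by linarith
    rw [hρ τ hτ₁]
    unfold quadModel moebius
    field_simp
  subst haτ
  obtain ⟨hmem, hmin⟩ := isMinOn_quadModel (hBpd.inner_toEuclideanLin_pos ha) hs hr hrs hag
    hτcp hτs1 hτs2 hτs3
  refine ⟨hmem, fun τ hτ => ?_⟩
  rw [hρ' _ hmem, hρ' _ hτ]
  exact isMinOn_iff.mp hmin τ hτ
end

section
/- If aᵀg < 0, Δ‖a‖ < 1, and Δ·a_τ + ‖a‖·(aᵀg) ≤ 0, then −ρ(τ_Δ) ≥ −Δ·(aᵀg)/(2‖a‖); in particular −ρ(τ_Δ) > 0. -/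
/-!
Put `s = ‖a‖`, `c = aᵀg < 0`, `b = aᵀBa` and `u = 1 - Δs ∈ (0, 1)`. At `τ = Δ/s` the denominator
`1 - τs²` equals `u`, and clearing the positive factor `2s²u²` turns the claim into
`Δ²b ≤ Δcsu(u - 2)`. The hypothesis on `a_τ` says `Δb ≤ -csu`, and
`-Δcsu ≤ Δcsu(u - 2)` because `Δs(-c)u(1 - u) ≥ 0`.
-/

open scoped RealInnerProductSpace

/-- `ρ(τ)` as a function of `c = aᵀg`, `b = aᵀBa` and `s = ‖a‖`. -/
noncomputable def rhoModel (c b s τ : ℝ) : ℝ :=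
  τ * c / (1 - τ * s ^ 2) + τ ^ 2 * b / (2 * (1 - τ * s ^ 2) ^ 2)

lemma div_lt_one_div_sq {s Δ : ℝ} (hs : 0 < s) (hsmall : Δ * s < 1) : Δ / s < 1 / s ^ 2 :=
  (div_lt_div_iff₀ hs (by positivity)).2 (by nlinarith)

lemma rhoModel_le {c b s Δ : ℝ} (hs : 0 < s) (hΔ : 0 ≤ Δ) (hc : c ≤ 0) (hsmall : Δ * s < 1)
    (hcond : Δ * (b - s ^ 2 * c) + s * c ≤ 0) :
    rhoModel c b s (Δ / s) ≤ Δ * c / (2 * s) := by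
  set u := 1 - Δ * s with hu_def
  have hu : 0 < u := by linarith
  have hden : 1 - Δ / s * s ^ 2 = u := by rw [hu_def]; field_simp
  have hb : Δ * b ≤ -(c * s * u) := by linarith
  have hnum : Δ ^ 2 * b ≤ Δ * c * s * u * (u - 2) := by
    have hsign : 0 ≤ Δ * s * -c * u * (1 - u) :=
      mul_nonneg (by have := neg_nonneg.2 hc; positivity) (by nlinarith)
    nlinarith [mul_le_mul_of_nonneg_left hb hΔ]
  have hdiff : Δ * c / (2 * s) - rhoModel c b s (Δ / s)
      = (Δ * c * s * u * (u - 2) - Δ ^ 2 * b) / (2 * s ^ 2 * u ^ 2) := by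
    rw [rhoModel, hden]
    field_simp
    ring
  rw [← sub_nonneg, hdiff]
  exact div_nonneg (sub_nonneg.2 hnum) (by positivity)

theorem stmt_14 {{n : ℕ}} (hn : 1 ≤ n)
    (a g : EuclideanSpace ℝ (Fin n)) (ha : a ≠ 0)
    (B : Matrix (Fin n) (Fin n) ℝ) (hBs : B.IsSymm) (hBpd : B.PosDef)
    (ρ : ℝ → ℝ)
    (hρ : ∀ τ : ℝ, τ ≠ 1 / ‖a‖ ^ 2 →
      ρ τ = τ * ⟪a, g⟫ / (1 - τ * ‖a‖ ^ 2)
        + τ ^ 2 * ⟪a, Matrix.toEuclideanLin B a⟫ / (2 * (1 - τ * ‖a‖ ^ 2) ^ 2))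
    (aτ τm : ℝ)
    (haτ : aτ = ⟪a, Matrix.toEuclideanLin B a⟫ - ‖a‖ ^ 2 * ⟪a, g⟫)
    (hτm : τm = 1 / ‖a‖ ^ 2)
    (Δ : ℝ) (hΔ : 0 < Δ) (τΔ : ℝ) (hτΔ : τΔ = Δ / ‖a‖)
    (hag : ⟪a, g⟫ < 0) (hsmall : Δ * ‖a‖ < 1) (hcond : Δ * aτ + ‖a‖ * ⟪a, g⟫ ≤ 0) :
    -ρ τΔ ≥ -Δ * ⟪a, g⟫ / (2 * ‖a‖) ∧ 0 < -ρ τΔ := by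
  have hs : 0 < ‖a‖ := norm_pos_iff.2 ha
  subst hτΔ haτ
  have hle : ρ (Δ / ‖a‖) ≤ Δ * ⟪a, g⟫ / (2 * ‖a‖) := by
    rw [hρ _ (div_lt_one_div_sq hs hsmall).ne]
    exact rhoModel_le hs hΔ.le hag.le hsmall hcond
  have hneg : Δ * ⟪a, g⟫ / (2 * ‖a‖) < 0 :=
    div_neg_of_neg_of_pos (mul_neg_of_pos_of_neg hΔ hag) (by positivity)
  constructor
  · rw [neg_mul, neg_div]
    linarith
  · linarith
end

section
/- If a_τ > 0, aᵀg < 0, and τ_d ≤ τ_cp, then −ρ(τ_d) ≥ −(1 − ε₀)·(aᵀg)/(2ε₀‖a‖²); in particular −ρ(τ_d) > 0. -/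
/-! With `s = ‖a‖²`, `c = aᵀBa`, `G = aᵀg` and `ε = 1 - τ s`, the condition `τ ≤ τ_cp`, i.e.
`τ (c - s G) ≤ -G`, rearranges to `τ c ≤ -ε G`. This bounds the quadratic term of `ρ(τ)` by minus
half its linear term, so `ρ(τ) ≤ τ G / (2ε)`; at `τ = τ_d` we have `ε = ε₀`. -/

open scoped RealInnerProductSpace

lemma mul_le_of_le_neg_div {τ s c G : ℝ} (hpos : 0 < c - s * G) (hle : τ ≤ -G / (c - s * G)) :
    τ * c ≤ -(1 - τ * s) * G := by
  rw [le_div_iff₀ hpos] at hle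
  linarith

lemma add_div_sq_le_half {τ s c G : ℝ} (hτ : 0 ≤ τ) (hε : 0 < 1 - τ * s)
    (hc : τ * c ≤ -(1 - τ * s) * G) :
    τ * G / (1 - τ * s) + τ ^ 2 * c / (2 * (1 - τ * s) ^ 2) ≤ τ * G / (2 * (1 - τ * s)) := by
  set ε := 1 - τ * s
  have hquad : τ ^ 2 * c / (2 * ε ^ 2) ≤ -(τ * G) / (2 * ε) := by
    rw [div_le_div_iff₀ (by positivity) (by positivity)]
    nlinarith [mul_le_mul_of_nonneg_left hc (by positivity : 0 ≤ 2 * ε * τ)]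
  calc τ * G / ε + τ ^ 2 * c / (2 * ε ^ 2)
      ≤ τ * G / ε + -(τ * G) / (2 * ε) := by gcongr
    _ = τ * G / (2 * ε) := by field_simp; ring

theorem stmt_16 {{n : ℕ}} (hn : 1 ≤ n)
    (a g : EuclideanSpace ℝ (Fin n)) (ha : a ≠ 0)
    (B : Matrix (Fin n) (Fin n) ℝ) (hBs : B.IsSymm) (hBpd : B.PosDef)
    (ρ : ℝ → ℝ)
    (hρ : ∀ τ : ℝ, τ ≠ 1 / ‖a‖ ^ 2 →
      ρ τ = τ * ⟪a, g⟫ / (1 - τ * ‖a‖ ^ 2)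
        + τ ^ 2 * ⟪a, Matrix.toEuclideanLin B a⟫ / (2 * (1 - τ * ‖a‖ ^ 2) ^ 2))
    (aτ τm : ℝ)
    (haτ : aτ = ⟪a, Matrix.toEuclideanLin B a⟫ - ‖a‖ ^ 2 * ⟪a, g⟫)
    (hτm : τm = 1 / ‖a‖ ^ 2)
    (τcp : ℝ) (hτcp : aτ ≠ 0 → τcp = -⟪a, g⟫ / aτ)
    (ε₀ : ℝ) (hε₀ : 0 < ε₀) (hε₁ : ε₀ < 1)
    (τd τu : ℝ) (hτd : τd = (1 - ε₀) / ‖a‖ ^ 2) (hτu : τu = (1 + ε₀) / ‖a‖ ^ 2)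
    (haτpos : 0 < aτ) (hag : ⟪a, g⟫ < 0) (hle : τd ≤ τcp) :
    -ρ τd ≥ -(1 - ε₀) * ⟪a, g⟫ / (2 * ε₀ * ‖a‖ ^ 2) ∧ 0 < -ρ τd := by
  have hs : 0 < ‖a‖ ^ 2 := by positivity
  have hεd : 1 - τd * ‖a‖ ^ 2 = ε₀ := by rw [hτd]; field_simp; ring
  have hτd_ne : τd ≠ 1 / ‖a‖ ^ 2 := by
    rw [hτd]; intro h; field_simp at h; linarith
  have hc := mul_le_of_le_neg_div (haτ ▸ haτpos) (haτ ▸ hτcp haτpos.ne' ▸ hle)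
  have hbound := add_div_sq_le_half (by rw [hτd]; positivity) (hεd ▸ hε₀) hc
  rw [← hρ τd hτd_ne, hεd] at hbound
  have hrhs : τd * ⟪a, g⟫ / (2 * ε₀) = (1 - ε₀) * ⟪a, g⟫ / (2 * ε₀ * ‖a‖ ^ 2) := by
    rw [hτd]; field_simp
  have hneg : (1 - ε₀) * ⟪a, g⟫ / (2 * ε₀ * ‖a‖ ^ 2) < 0 :=
    div_neg_of_neg_of_pos (mul_neg_of_pos_of_neg (by linarith) hag) (by positivity)
  constructor
  · rw [neg_mul, neg_div]; linarith
  · linarith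
end

section
/- Let f : ℝⁿ → ℝ be twice continuously differentiable, let x, s, a ∈ ℝⁿ, let B be a symmetric positive definite real n×n matrix, let ε₀ ∈ (0,1) with |1 − aᵀs| ≥ ε₀, and let g = ∇f(x). Suppose M ≥ 0 satisfies ‖∇²f(x + t·s)‖ ≤ M (operator norm) for all t ∈ [0,1]. Then |f(x) − f(x + s) + (gᵀs)/(1 − aᵀs) + (sᵀBs)/(2(1 − aᵀs)²)| ≤ (M/2 + ‖g‖·‖a‖/ε₀ + ‖B‖/(2ε₀²))·‖s‖², where ‖B‖ is the operator norm of B. (This bounds the difference between the actual reduction f(x) − f(x+s) and the predicted reduction of the conic model −(gᵀs)/(1 − aᵀs) − (sᵀBs)/(2(1 − aᵀs)²).) -/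
/-!
Split the error into the second-order Taylor remainder `f (x + s) - f x - gᵀs`, bounded by
`M/2 ‖s‖²` via the Hessian bound along the segment, and the discrepancy between the conic and the
linear model, `gᵀs/(1 - aᵀs) - gᵀs + sᵀBs/(2(1 - aᵀs)²) = (gᵀs)(aᵀs)/(1 - aᵀs) + sᵀBs/(2(1 - aᵀs)²)`,
which Cauchy–Schwarz and `|1 - aᵀs| ≥ ε₀` bound termwise.
-/

open Set

open scoped RealInnerProductSpace

theorem norm_image_sub_sub_deriv_le_of_norm_deriv2_le_segment {E : Type*} [NormedAddCommGroup E]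
    [NormedSpace ℝ E] {φ φ' φ'' : ℝ → E} {a b C : ℝ}
    (hφ : ∀ t ∈ Icc a b, HasDerivWithinAt φ (φ' t) (Icc a b) t)
    (hφ' : ∀ t ∈ Icc a b, HasDerivWithinAt φ' (φ'' t) (Icc a b) t)
    (bound : ∀ t ∈ Ico a b, ‖φ'' t‖ ≤ C) :
    ∀ t ∈ Icc a b, ‖φ t - φ a - (t - a) • φ' a‖ ≤ C * (t - a) ^ 2 / 2 := by
  have hφ'_sub := norm_image_sub_le_of_norm_deriv_le_segment' hφ' bound
  refine image_norm_le_of_norm_deriv_right_le_deriv_boundary (f' := fun t => φ' t - φ' a)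
    (B := fun t => C * (t - a) ^ 2 / 2) (B' := fun t => C * (t - a))
    (fun t ht => ?_) (fun t ht => ?_) (by simp) (fun t => ?_)
    (fun t ht => hφ'_sub t (Ico_subset_Icc_self ht))
  · exact ((hφ t ht).continuousWithinAt.sub continuousWithinAt_const).sub
      ((continuousWithinAt_id.sub continuousWithinAt_const).smul continuousWithinAt_const)
  · have hline : HasDerivWithinAt (fun t : ℝ => (t - a) • φ' a) (φ' a) (Ici t) t := by
      simpa using ((hasDerivWithinAt_id t _).sub_const a).smul_const (φ' a)
    exact (((hφ t (Ico_subset_Icc_self ht)).mono_of_mem_nhdsWithin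
      (Icc_mem_nhdsGE_of_mem ht)).sub_const (φ a)).sub hline
  · exact ((((hasDerivAt_id' t).sub_const a).fun_pow 2).const_mul C |>.div_const 2).congr_deriv
      (by ring)

theorem norm_sub_sub_fderiv_le_of_norm_fderiv_fderiv_le {E F : Type*} [NormedAddCommGroup E]
    [NormedSpace ℝ E] [NormedAddCommGroup F] [NormedSpace ℝ F] {f : E → F} (hf : ContDiff ℝ 2 f)
    {x s : E} {M : ℝ} (hM : ∀ t ∈ Icc (0 : ℝ) 1, ‖fderiv ℝ (fderiv ℝ f) (x + t • s)‖ ≤ M) :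
    ‖f (x + s) - f x - fderiv ℝ f x s‖ ≤ M / 2 * ‖s‖ ^ 2 := by
  have hline (t : ℝ) : HasDerivAt (fun t : ℝ => x + t • s) s t := by
    simpa using ((hasDerivAt_id t).smul_const s).const_add x
  have hf' : Differentiable ℝ f := hf.differentiable two_ne_zero
  have hf'' : Differentiable ℝ (fderiv ℝ f) :=
    (hf.fderiv_right (m := 1) le_rfl).differentiable one_ne_zero
  have key := norm_image_sub_sub_deriv_le_of_norm_deriv2_le_segment
    (φ := fun t => f (x + t • s)) (φ' := fun t => fderiv ℝ f (x + t • s) s)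
    (φ'' := fun t => fderiv ℝ (fderiv ℝ f) (x + t • s) s s) (C := M * ‖s‖ ^ 2)
    (fun t _ => ((hf' _).hasFDerivAt.comp_hasDerivAt t (hline t)).hasDerivWithinAt)
    (fun t _ => (((hf'' _).hasFDerivAt.comp_hasDerivAt t (hline t)).clm_apply
      (hasDerivAt_const t s)).hasDerivWithinAt.congr_deriv (by simp))
    (fun t ht => ?_) 1 (right_mem_Icc.2 zero_le_one)
  · simpa [mul_div_right_comm] using key
  · calc ‖fderiv ℝ (fderiv ℝ f) (x + t • s) s s‖
          ≤ ‖fderiv ℝ (fderiv ℝ f) (x + t • s)‖ * ‖s‖ * ‖s‖ := ContinuousLinearMap.le_opNorm₂ _ _ _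
      _ ≤ M * ‖s‖ ^ 2 := by rw [mul_assoc, ← sq]; gcongr; exact hM t (Ico_subset_Icc_self ht)

theorem abs_div_sub_add_div_sq_le {u v q ε : ℝ} (hε : 0 < ε) (hv : ε ≤ |1 - v|) :
    |u / (1 - v) - u + q / (2 * (1 - v) ^ 2)| ≤ |u| * |v| / ε + |q| / (2 * ε ^ 2) := by
  have hd : 1 - v ≠ 0 := abs_pos.1 (hε.trans_le hv)
  have hsq : ε ^ 2 ≤ (1 - v) ^ 2 := by rw [← sq_abs (1 - v)]; gcongr
  have hlinear : u / (1 - v) - u = u * v / (1 - v) := by field_simp; ring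
  rw [hlinear]
  calc _ ≤ |u * v / (1 - v)| + |q / (2 * (1 - v) ^ 2)| := abs_add_le _ _
    _ ≤ _ := by
      rw [abs_div, abs_div, abs_mul, abs_of_pos (by positivity : 0 < 2 * (1 - v) ^ 2)]
      gcongr

theorem stmt_18_general {n : ℕ}
    (f : EuclideanSpace ℝ (Fin n) → ℝ) (hf : ContDiff ℝ 2 f)
    (x s a : EuclideanSpace ℝ (Fin n))
    (B : Matrix (Fin n) (Fin n) ℝ)
    (ε₀ : ℝ) (hε₀ : 0 < ε₀)
    (hfeas : ε₀ ≤ |1 - ⟪a, s⟫|)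
    (g : EuclideanSpace ℝ (Fin n)) (hg : g = gradient f x)
    (M : ℝ)
    (hHess : ∀ t ∈ Set.Icc (0 : ℝ) 1, ‖fderiv ℝ (fderiv ℝ f) (x + t • s)‖ ≤ M) :
    |f x - f (x + s) + ⟪g, s⟫ / (1 - ⟪a, s⟫)
        + ⟪s, Matrix.toEuclideanLin B s⟫ / (2 * (1 - ⟪a, s⟫) ^ 2)|
      ≤ (M / 2 + ‖g‖ * ‖a‖ / ε₀ + ‖Matrix.toEuclideanCLM (𝕜 := ℝ) B‖ / (2 * ε₀ ^ 2))
          * ‖s‖ ^ 2 := by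
  set T := Matrix.toEuclideanCLM (𝕜 := ℝ) B
  have hgs : ⟪g, s⟫ = fderiv ℝ f x s := by
    rw [hg, ← InnerProductSpace.toDual_apply_apply, toDual_gradient]
  have htaylor := norm_sub_sub_fderiv_le_of_norm_fderiv_fderiv_le hf hHess
  rw [Real.norm_eq_abs, ← hgs] at htaylor
  have hconic := abs_div_sub_add_div_sq_le (u := ⟪g, s⟫) (q := ⟪s, T s⟫) hε₀ hfeas
  have hgas : |⟪g, s⟫| * |⟪a, s⟫| ≤ ‖g‖ * ‖a‖ * ‖s‖ ^ 2 :=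
    (mul_le_mul (abs_real_inner_le_norm g s) (abs_real_inner_le_norm a s) (abs_nonneg _)
      (by positivity)).trans_eq (by ring)
  have hq : |⟪s, T s⟫| ≤ ‖T‖ * ‖s‖ ^ 2 :=
    (abs_real_inner_le_norm s (T s)).trans <| by
      rw [mul_comm, sq, ← mul_assoc]; gcongr; exact T.le_opNorm s
  change |_ + ⟪s, T s⟫ / _| ≤ _
  calc _ = |-(f (x + s) - f x - ⟪g, s⟫) + (⟪g, s⟫ / (1 - ⟪a, s⟫) - ⟪g, s⟫
          + ⟪s, T s⟫ / (2 * (1 - ⟪a, s⟫) ^ 2))| := by congr 1; ring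
    _ ≤ M / 2 * ‖s‖ ^ 2 + (|⟪g, s⟫| * |⟪a, s⟫| / ε₀ + |⟪s, T s⟫| / (2 * ε₀ ^ 2)) :=
        (abs_add_le _ _).trans (add_le_add (by rwa [abs_neg]) hconic)
    _ ≤ M / 2 * ‖s‖ ^ 2 + (‖g‖ * ‖a‖ * ‖s‖ ^ 2 / ε₀ + ‖T‖ * ‖s‖ ^ 2 / (2 * ε₀ ^ 2)) := by
        gcongr
    _ = _ := by ring

theorem stmt_18 {n : ℕ} (hn : 1 ≤ n)
    (f : EuclideanSpace ℝ (Fin n) → ℝ) (hf : ContDiff ℝ 2 f)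
    (x s a : EuclideanSpace ℝ (Fin n))
    (B : Matrix (Fin n) (Fin n) ℝ) (hBs : B.IsSymm) (hBpd : B.PosDef)
    (ε₀ : ℝ) (hε₀ : 0 < ε₀) (hε₁ : ε₀ < 1)
    (hfeas : ε₀ ≤ |1 - ⟪a, s⟫|)
    (g : EuclideanSpace ℝ (Fin n)) (hg : g = gradient f x)
    (M : ℝ) (hM : 0 ≤ M)
    (hHess : ∀ t ∈ Set.Icc (0 : ℝ) 1, ‖fderiv ℝ (fderiv ℝ f) (x + t • s)‖ ≤ M) :
    |f x - f (x + s) + ⟪g, s⟫ / (1 - ⟪a, s⟫)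
        + ⟪s, Matrix.toEuclideanLin B s⟫ / (2 * (1 - ⟪a, s⟫) ^ 2)|
      ≤ (M / 2 + ‖g‖ * ‖a‖ / ε₀ + ‖Matrix.toEuclideanCLM (𝕜 := ℝ) B‖ / (2 * ε₀ ^ 2))
          * ‖s‖ ^ 2 :=
  stmt_18_general f hf x s a B ε₀ hε₀ hfeas g hg M hHess
end
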